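/- arXiv:2104.02099 — 2 statements merged into one kernel-verified Lean document; each statement's English description precedes it below -/
import Mathlib

section
/- For every real α > 0, the equation r + ∑_{n=2}^∞ 4 r^n/(α n² + (1−α) n) = 1 + ∑_{n=2}^∞ 2(−1)^{n−1}/(α n² + (1−α) n) has a unique solution r in the open interval (0,1). -/
/-!
Write `L(r)` for the left-hand side. Each term `4 r^n / (α n² + (1-α) n)` is nonnegative and bounded
by the summable `4 / (α n² + (1-α) n)`, so `L` is continuous and strictly increasing on `[0, 1]`,
with `L 0 = 0` and `L 1 > 1`. The right-hand side is `1 - S`, where `S` is an alternating series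
with decreasing terms `2 / (α n² + (1-α) n)`; hence `0 ≤ S ≤ 1 / (1 + α) < 1`, so the right-hand
side lies in `(0, 1]`, and the intermediate value theorem gives exactly one solution.
-/

open Set

theorem Antitone.tsum_alternating_mem_Icc {f : ℕ → ℝ} (hfa : Antitone f) (hf : Summable f) :
    ∑' n, (-1) ^ n * f n ∈ Icc 0 (f 0) := by
  have hsum : Summable (fun n => (-1) ^ n * f n) := hf.abs.of_norm_bounded (fun n => by simp)
  have hlim := hsum.hasSum.tendsto_sum_nat
  constructor
  · simpa using hfa.alternating_series_le_tendsto hlim 0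
  · simpa using hfa.tendsto_le_alternating_series hlim 0

section PowerSeries

variable {c : ℕ → ℝ} (e : ℕ → ℕ)

theorem summable_mul_pow_of_mem_Icc (hc : 0 ≤ c) (hs : Summable c) {r : ℝ} (hr : r ∈ Icc 0 1) :
    Summable (fun n => c n * r ^ e n) :=
  hs.of_nonneg_of_le (fun n => mul_nonneg (hc n) (pow_nonneg hr.1 _))
    (fun n => mul_le_of_le_one_right (hc n) (pow_le_one₀ hr.1 hr.2))

theorem monotoneOn_tsum_mul_pow (hc : 0 ≤ c) (hs : Summable c) :
    MonotoneOn (fun r : ℝ => ∑' n, c n * r ^ e n) (Icc 0 1) := fun _ hx _ hy hxy =>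
  (summable_mul_pow_of_mem_Icc e hc hs hx).tsum_le_tsum
    (fun n => mul_le_mul_of_nonneg_left (pow_le_pow_left₀ hx.1 hxy _) (hc n))
    (summable_mul_pow_of_mem_Icc e hc hs hy)

theorem continuousOn_tsum_mul_pow (hs : Summable c) :
    ContinuousOn (fun r : ℝ => ∑' n, c n * r ^ e n) (Icc 0 1) := by
  refine continuousOn_tsum (fun n => by fun_prop) hs.abs (fun n r hr => ?_)
  rw [norm_mul, norm_pow, Real.norm_eq_abs, Real.norm_eq_abs, abs_of_nonneg hr.1]
  exact mul_le_of_le_one_right (abs_nonneg _) (pow_le_one₀ hr.1 hr.2)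

end PowerSeries

/-- The paper's `α m ^ 2 + (1 - α) m` at `m = n + 2`, so that both series are indexed from `0`. -/
noncomputable def denom (α : ℝ) (n : ℕ) : ℝ :=
  α * ((n : ℝ) + 2) ^ 2 + (1 - α) * ((n : ℝ) + 2)

section Denom

variable {α : ℝ}

theorem denom_eq_mul (α : ℝ) (n : ℕ) : denom α n = ((n : ℝ) + 2) * (α * ((n : ℝ) + 1) + 1) := by
  unfold denom; ring

theorem denom_pos (hα : 0 ≤ α) (n : ℕ) : 0 < denom α n := by
  rw [denom_eq_mul]; positivity

theorem monotone_denom (hα : 0 ≤ α) : Monotone (denom α) := by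
  intro n m hnm
  have hdiff : denom α m - denom α n = ((m : ℝ) - n) * (α * ((m : ℝ) + n + 3) + 1) := by
    unfold denom; ring
  have hnm : 0 ≤ (m : ℝ) - n := sub_nonneg.mpr (Nat.cast_le.mpr hnm)
  have hfactor : 0 ≤ ((m : ℝ) - n) * (α * ((m : ℝ) + n + 3) + 1) := by positivity
  linarith

theorem summable_inv_denom (hα : 0 < α) : Summable (fun n => (denom α n)⁻¹) := by
  have hsq : Summable (fun n : ℕ => α⁻¹ * (((n : ℝ) + 1) ^ 2)⁻¹) := by
    refine Summable.mul_left _ ?_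
    exact_mod_cast (summable_nat_add_iff 1).mpr (Real.summable_nat_pow_inv.mpr one_lt_two)
  refine hsq.of_nonneg_of_le (fun n => (inv_pos.mpr (denom_pos hα.le n)).le) (fun n => ?_)
  rw [← mul_inv]
  have h0 : (0 : ℝ) ≤ n := n.cast_nonneg
  gcongr
  rw [denom_eq_mul]
  nlinarith

theorem summable_div_denom (hα : 0 < α) (c : ℝ) : Summable (fun n => c / denom α n) := by
  simpa only [div_eq_mul_inv] using (summable_inv_denom hα).mul_left c

theorem antitone_div_denom (hα : 0 ≤ α) {c : ℝ} (hc : 0 ≤ c) :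
    Antitone (fun n => c / denom α n) := fun m _ hmn =>
  div_le_div_of_nonneg_left hc (denom_pos hα m) (monotone_denom hα hmn)

end Denom

theorem StrictMonoOn.existsUnique_mem_Ioo_eq {f : ℝ → ℝ} {a b c : ℝ} (hab : a ≤ b)
    (hmono : StrictMonoOn f (Icc a b)) (hcont : ContinuousOn f (Icc a b))
    (hc : c ∈ Ioo (f a) (f b)) : ∃! x, x ∈ Ioo a b ∧ f x = c := by
  obtain ⟨x, hx, hfx⟩ := intermediate_value_Ioo hab hcont hc
  refine ⟨x, ⟨hx, hfx⟩, fun y ⟨hy, hfy⟩ => ?_⟩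
  exact hmono.injOn (Ioo_subset_Icc_self hy) (Ioo_subset_Icc_self hx) (hfy.trans hfx.symm)

noncomputable def lhs (α r : ℝ) : ℝ := r + ∑' n : ℕ, 4 * r ^ (n + 2) / denom α n

noncomputable def rhs (α : ℝ) : ℝ := 1 + ∑' n : ℕ, 2 * (-1 : ℝ) ^ (n + 1) / denom α n

section Equation

variable {α : ℝ}

theorem lhs_eq (α r : ℝ) : lhs α r = r + ∑' n : ℕ, 4 / denom α n * r ^ (n + 2) := by
  simp only [lhs, mul_div_right_comm]

theorem four_div_denom_nonneg (hα : 0 ≤ α) : 0 ≤ fun n => 4 / denom α n :=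
  fun n => (div_pos four_pos (denom_pos hα n)).le

theorem strictMonoOn_lhs (hα : 0 < α) : StrictMonoOn (lhs α) (Icc 0 1) := by
  simp only [funext (lhs_eq α)]
  exact strictMonoOn_id.add_monotone
    (monotoneOn_tsum_mul_pow _ (four_div_denom_nonneg hα.le) (summable_div_denom hα 4))

theorem continuousOn_lhs (hα : 0 < α) : ContinuousOn (lhs α) (Icc 0 1) := by
  simp only [funext (lhs_eq α)]
  exact continuousOn_id.add (continuousOn_tsum_mul_pow _ (summable_div_denom hα 4))

theorem lhs_zero (α : ℝ) : lhs α 0 = 0 := by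
  simp [lhs]

theorem one_lt_lhs_one (hα : 0 < α) : 1 < lhs α 1 := by
  rw [lhs_eq]
  have hpos : 0 < ∑' n : ℕ, 4 / denom α n * 1 ^ (n + 2) := by
    simp only [one_pow, mul_one]
    exact (summable_div_denom hα 4).tsum_pos (four_div_denom_nonneg hα.le) 0
      (div_pos four_pos (denom_pos hα.le 0))
  linarith

theorem rhs_eq (α : ℝ) : rhs α = 1 - ∑' n : ℕ, (-1) ^ n * (2 / denom α n) := by
  rw [rhs, sub_eq_add_neg, ← tsum_neg]
  congr 1
  refine tsum_congr fun n => ?_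
  rw [pow_succ]
  ring

theorem rhs_mem_Ioc (hα : 0 < α) : rhs α ∈ Ioc 0 1 := by
  obtain ⟨hS0, hS1⟩ :=
    (antitone_div_denom hα.le zero_le_two).tsum_alternating_mem_Icc (summable_div_denom hα 2)
  have hfirst : 2 / denom α 0 < 1 := by
    rw [div_lt_one (denom_pos hα.le 0), denom_eq_mul]
    norm_num
    linarith
  rw [rhs_eq]
  constructor <;> linarith

end Equation

theorem stmt10 (α : ℝ) (hα : 0 < α) :
    ∃! r : ℝ, r ∈ Set.Ioo (0 : ℝ) 1 ∧
      r + (∑' n : ℕ, 4 * r ^ (n + 2) / (α * ((n : ℝ) + 2) ^ 2 + (1 - α) * ((n : ℝ) + 2)))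
        = 1 + ∑' n : ℕ, 2 * (-1 : ℝ) ^ (n + 1) / (α * ((n : ℝ) + 2) ^ 2 + (1 - α) * ((n : ℝ) + 2)) := by
  have hrhs : rhs α ∈ Ioo (lhs α 0) (lhs α 1) :=
    ⟨(lhs_zero α).symm ▸ (rhs_mem_Ioc hα).1, (rhs_mem_Ioc hα).2.trans_lt (one_lt_lhs_one hα)⟩
  exact (strictMonoOn_lhs hα).existsUnique_mem_Ioo_eq zero_le_one (continuousOn_lhs hα) hrhs
end

section
/- The function H₁(r) = (8/r)(1−r)·log(1−r) − 3r + 13 − 8·log 2 has a unique zero in (0,1); equivalently, there is a unique r ∈ (0,1) with r + ∑_{n=2}^∞ 8 r^n/(n²+n) = 1 + 2(−3 + 4 log 2). -/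
/-!
Splitting `1 / (n² + n) = 1 / n - 1 / (n + 1)` turns the series into two tails of the
logarithmic series `-log (1 - r) = ∑ rⁿ / n`, which gives the closed form
`r + ∑_{n ≥ 2} 8 rⁿ / (n² + n) = 8 - 3 r + (8 / r) (1 - r) log (1 - r)` on `(0, 1)`; both
equations of the theorem say that this function takes the value `8 log 2 - 5`. The series
form shows that the function is strictly increasing, and comparing its values at `1/16` and
`3/4` with `8 log 2 - 5` gives a solution by the intermediate value theorem.
-/

open Real Set

theorem hasSum_pow_add_div_add {r : ℝ} (hr : |r| < 1) (k : ℕ) :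
    HasSum (fun n : ℕ => r ^ (n + k + 1) / ((n + k : ℕ) + 1 : ℝ))
      (-log (1 - r) - ∑ i ∈ Finset.range k, r ^ (i + 1) / ((i : ℝ) + 1)) :=
  (hasSum_nat_add_iff' (f := fun n : ℕ => r ^ (n + 1) / ((n : ℝ) + 1)) k).mpr
    (hasSum_pow_div_log_of_abs_lt_one hr)

theorem hasSum_pow_add_two_div_sq_add {r : ℝ} (hr : |r| < 1) (hr0 : r ≠ 0) :
    HasSum (fun n : ℕ => r ^ (n + 2) / (((n : ℝ) + 2) ^ 2 + ((n : ℝ) + 2)))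
      (1 - r / 2 + (1 - r) / r * log (1 - r)) := by
  have tail₂ := hasSum_pow_add_div_add hr 1
  have tail₃ := (hasSum_pow_add_div_add hr 2).mul_left r⁻¹
  have h := (tail₂.sub tail₃).congr_fun
    (g := fun n : ℕ => r ^ (n + 2) / (((n : ℝ) + 2) ^ 2 + ((n : ℝ) + 2))) fun n => by
      push_cast
      field_simp
      ring
  refine (congrArg (HasSum _) ?_).mpr h
  simp only [Finset.sum_range_succ, Finset.sum_range_zero]
  field_simp
  ring

/-- `r + ∑_{n ≥ 2} 8 rⁿ / (n² + n)` in closed form. -/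
noncomputable def seriesSum (r : ℝ) : ℝ :=
  8 - 3 * r + 8 / r * (1 - r) * log (1 - r)

theorem hasSum_seriesSum_sub {r : ℝ} (hr : |r| < 1) (hr0 : r ≠ 0) :
    HasSum (fun n : ℕ => 8 * r ^ (n + 2) / (((n : ℝ) + 2) ^ 2 + ((n : ℝ) + 2)))
      (seriesSum r - r) := by
  have h := ((hasSum_pow_add_two_div_sq_add hr hr0).mul_left 8).congr_fun
    fun n => mul_div_assoc _ _ _
  refine (congrArg (HasSum _) ?_).mpr h
  rw [seriesSum]
  field_simp
  ring

theorem seriesSum_eq_add_tsum {r : ℝ} (hr : |r| < 1) (hr0 : r ≠ 0) :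
    seriesSum r = r + ∑' n : ℕ, 8 * r ^ (n + 2) / (((n : ℝ) + 2) ^ 2 + ((n : ℝ) + 2)) := by
  rw [(hasSum_seriesSum_sub hr hr0).tsum_eq]
  ring

theorem abs_lt_one_of_mem_Ioo {r : ℝ} (hr : r ∈ Ioo (0 : ℝ) 1) : |r| < 1 :=
  abs_lt.2 ⟨by linarith [hr.1], hr.2⟩

theorem strictMonoOn_seriesSum : StrictMonoOn seriesSum (Ioo 0 1) := by
  intro a ha b hb hab
  have tail_le : seriesSum a - a ≤ seriesSum b - b :=
    hasSum_le (fun n => by gcongr; exact ha.1.le)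
      (hasSum_seriesSum_sub (abs_lt_one_of_mem_Ioo ha) ha.1.ne')
      (hasSum_seriesSum_sub (abs_lt_one_of_mem_Ioo hb) hb.1.ne')
  linarith

theorem continuousOn_seriesSum : ContinuousOn seriesSum (Ioo 0 1) := by
  unfold seriesSum
  fun_prop 
    (disch := intro x hx; simp only [mem_Ioo, ne_eq] at hx ⊢; linarith [hx.1, hx.2])

theorem seriesSum_one_div_sixteen_lt : seriesSum (1 / 16) < 8 * log 2 - 5 := by
  have log_le : log (15 / 16) ≤ -(1 / 16) := by
    linarith [log_le_sub_one_of_pos (x := 15 / 16) (by norm_num)]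
  have := log_two_gt_d9
  norm_num [seriesSum]
  linarith

theorem lt_seriesSum_three_div_four : 8 * log 2 - 5 < seriesSum (3 / 4) := by
  have log_quarter : log (1 - 3 / 4) = -(2 * log 2) := by
    rw [show (1 - 3 / 4 : ℝ) = (2 ^ 2)⁻¹ by norm_num, log_inv, log_pow]
    push_cast
    ring
  have := log_two_lt_d9
  rw [seriesSum, log_quarter]
  norm_num at this ⊢
  linarith

theorem existsUnique_seriesSum_eq :
    ∃! r : ℝ, r ∈ Ioo (0 : ℝ) 1 ∧ seriesSum r = 8 * log 2 - 5 := by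
  have sub : Icc (1 / 16 : ℝ) (3 / 4) ⊆ Ioo 0 1 := Icc_subset_Ioo (by norm_num) (by norm_num)
  obtain ⟨r, hr, hr_eq⟩ :=
    intermediate_value_Ioo (by norm_num) (continuousOn_seriesSum.mono sub)
    ⟨seriesSum_one_div_sixteen_lt, lt_seriesSum_three_div_four⟩
  refine ⟨r, ⟨sub (Ioo_subset_Icc_self hr), hr_eq⟩, fun s ⟨hs, hs_eq⟩ => ?_⟩
  exact strictMonoOn_seriesSum.injOn hs (sub (Ioo_subset_Icc_self hr)) (hs_eq.trans hr_eq.symm)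

theorem stmt14 :
    (∃! r : ℝ, r ∈ Set.Ioo (0 : ℝ) 1 ∧
      (8 / r) * (1 - r) * Real.log (1 - r) - 3 * r + 13 - 8 * Real.log 2 = 0) ∧
    (∃! r : ℝ, r ∈ Set.Ioo (0 : ℝ) 1 ∧
      r + (∑' n : ℕ, 8 * r ^ (n + 2) / (((n : ℝ) + 2) ^ 2 + ((n : ℝ) + 2)))
        = 1 + 2 * (-3 + 4 * Real.log 2)) := by
  constructor
  · refine (existsUnique_congr fun r => and_congr_right fun _ => ?_).1 existsUnique_seriesSum_eq
    rw [seriesSum]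
    constructor <;> intro h <;> linarith
  · refine (existsUnique_congr fun r => and_congr_right fun hr => ?_).1 existsUnique_seriesSum_eq
    rw [← seriesSum_eq_add_tsum (abs_lt_one_of_mem_Ioo hr) hr.1.ne']
    constructor <;> intro h <;> linarith
end
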